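/- For a ternary derivation δ of a full Hilbert B-module E, δ is closable if and only if the induced derivation d_δ (with d_δ(⟨x,y⟩) = ⟨δ(x),y⟩ + ⟨x,δ(y)⟩) is closable. -/

import Mathlib

open scoped RightActions
open Filter Topology

/-- The Hilbert C⋆-module class as it stood in Mathlib of December 2024: a right `A`-module
(action of `Aᵐᵒᵖ`), inner product `A`-linear on the right: `⟪x, y <• a⟫ = ⟪x, y⟫ * a`. -/
class CStarModuleRight (A E : Type*) [NonUnitalSemiring A] [StarRing A]
    [Module ℂ A] [AddCommGroup E] [Module ℂ E] [PartialOrder A] [SMul Aᵐᵒᵖ E] [Norm A] [Norm E]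
    extends Inner A E where
  inner_add_right {x} {y} {z} : inner x (y + z) = inner x y + inner x z
  inner_self_nonneg {x} : 0 ≤ inner x x
  inner_self {x} : inner x x = 0 ↔ x = 0
  inner_op_smul_right {a : A} {x y : E} : inner x (y <• a) = inner x y * a
  inner_smul_right_complex {z : ℂ} {x} {y} : inner x (z • y) = z • inner x y
  star_inner x y : star (inner x y) = inner y x
  norm_eq_sqrt_norm_inner_self x : ‖x‖ = Real.sqrt ‖inner x x‖


/-!
The two derivations are tied together by the Leibniz rule `δ(x ⬝ b) = δ(x) ⬝ b + x ⬝ d_δ(b)`,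
valid for `x ∈ dom δ` and `b` in the span `𝒮` of the inner products of `dom δ`.

If `δ` is closable and `bₙ → 0` in `𝒮` with `d_δ(bₙ) → c`, then for `x ∈ dom δ` we have
`x ⬝ bₙ → 0` and `δ(x ⬝ bₙ) → x ⬝ c`, so `x ⬝ c = 0`; by density `E ⬝ c = 0`, hence
`⟨E, E⟩ c = 0`, and fullness gives `c* c = 0`, i.e. `c = 0`.

Conversely, if `d_δ` is closable, `xₙ → 0` and `δ(xₙ) → e`, then for `y ∈ dom δ` we have
`⟨xₙ, y⟩ → 0` and `d_δ⟨xₙ, y⟩ = ⟨δ(xₙ), y⟩ + ⟨xₙ, δ(y)⟩ → ⟨e, y⟩`, so `⟨e, y⟩ = 0`;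
by density `⟨e, e⟩ = 0`.
-/

def IsSeqClosable {R E F : Type*} [Semiring R] [AddCommMonoid E] [Module R E]
    [TopologicalSpace E] [AddCommMonoid F] [Module R F] [TopologicalSpace F]
    {D : Submodule R E} (f : D →ₗ[R] F) : Prop :=
  ∀ (x : ℕ → D) (y : F), Tendsto (fun n => (x n : E)) atTop (𝓝 0) →
    Tendsto (fun n => f (x n)) atTop (𝓝 y) → y = 0

namespace CStarModuleRight

variable {B E : Type*} [NonUnitalCStarAlgebra B] [PartialOrder B]
  [NormedAddCommGroup E] [NormedSpace ℂ E] [SMul Bᵐᵒᵖ E] [CStarModuleRight B E]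

noncomputable abbrev toCStarModuleOp : CStarModule Bᵐᵒᵖ E where
  inner x y := MulOpposite.op (inner B x y)
  inner_add_right := congrArg MulOpposite.op inner_add_right
  inner_self_nonneg := MulOpposite.op_le_op.mpr inner_self_nonneg
  inner_self := MulOpposite.op_eq_zero_iff _ |>.trans inner_self
  inner_op_smul_right := congrArg MulOpposite.op inner_op_smul_right
  inner_smul_right_complex := congrArg MulOpposite.op inner_smul_right_complex
  star_inner x y := congrArg MulOpposite.op (star_inner x y)
  norm_eq_sqrt_norm_inner_self x := norm_eq_sqrt_norm_inner_self (A := B) x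

attribute [local instance] toCStarModuleOp

lemma inner_eq_unop_inner_op (x y : E) :
    (inner B x y : B) = MulOpposite.unop (inner Bᵐᵒᵖ x y) := rfl

@[simp] lemma inner_zero_right {x : E} : (inner B x (0 : E) : B) = 0 := by
  simp [inner_eq_unop_inner_op]

@[simp] lemma inner_zero_left {x : E} : (inner B (0 : E) x : B) = 0 := by
  simp [inner_eq_unop_inner_op]

lemma inner_sub_right {x y z : E} : (inner B x (y - z) : B) = inner B x y - inner B x z := by
  simp [inner_eq_unop_inner_op]

lemma inner_op_smul_left {a : B} {x y : E} : (inner B (x <• a) y : B) = star a * inner B x y := by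
  rw [← star_inner y, inner_op_smul_right, star_mul, star_inner]

lemma norm_sq_eq_norm_inner_self (x : E) : ‖x‖ ^ 2 = ‖(inner B x x : B)‖ := by
  rw [norm_eq_sqrt_norm_inner_self (A := B) x, Real.sq_sqrt (norm_nonneg _)]

lemma ext_inner_left {u v : E} (h : ∀ z : E, (inner B z u : B) = inner B z v) : u = v := by
  rw [← sub_eq_zero, ← inner_self (A := B), inner_sub_right, h, sub_self]

lemma op_smul_add (x : E) (a b : B) : x <• (a + b) = x <• a + x <• b :=
  ext_inner_left (B := B) fun z => by simp only [inner_op_smul_right, inner_add_right, mul_add]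

lemma op_smul_smul (c : ℂ) (x : E) (a : B) : x <• (c • a) = c • (x <• a) :=
  ext_inner_left (B := B) fun z => by
    simp only [inner_op_smul_right, inner_smul_right_complex, mul_smul_comm]

lemma add_op_smul (x y : E) (a : B) : (x + y) <• a = x <• a + y <• a :=
  ext_inner_left (B := B) fun z => by simp only [inner_op_smul_right, inner_add_right, add_mul]

lemma smul_op_smul (c : ℂ) (x : E) (a : B) : (c • x) <• a = c • (x <• a) :=
  ext_inner_left (B := B) fun z => by
    simp only [inner_op_smul_right, inner_smul_right_complex, smul_mul_assoc]

lemma norm_op_smul_le (x : E) (a : B) : ‖x <• a‖ ≤ ‖x‖ * ‖a‖ := by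
  have h : ‖x <• a‖ ^ 2 ≤ (‖x‖ * ‖a‖) ^ 2 :=
    calc ‖x <• a‖ ^ 2 = ‖star a * (inner B x x : B) * a‖ := by
          rw [norm_sq_eq_norm_inner_self (B := B), inner_op_smul_right, inner_op_smul_left,
            mul_assoc]
      _ ≤ ‖star a‖ * ‖(inner B x x : B)‖ * ‖a‖ := norm_mul₃_le
      _ = (‖x‖ * ‖a‖) ^ 2 := by rw [norm_star, ← norm_sq_eq_norm_inner_self]; ring
  exact le_of_pow_le_pow_left₀ two_ne_zero (by positivity) h

variable (B E) in
noncomputable def opSMulCLM : E →L[ℂ] B →L[ℂ] E :=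
  (LinearMap.mk₂ ℂ (fun x b => x <• b) add_op_smul smul_op_smul op_smul_add op_smul_smul
    ).mkContinuous₂ 1 fun x b => by simpa using norm_op_smul_le x b

lemma eq_zero_of_forall_op_smul_eq_zero
    (hfull : (Submodule.span ℂ {b : B | ∃ x y : E, (inner B x y : B) = b}).topologicalClosure = ⊤)
    {c : B} (h : ∀ x : E, x <• c = 0) : c = 0 := by
  let R : B →L[ℂ] B := (ContinuousLinearMap.mul ℂ B).flip c
  have hspan : Submodule.span ℂ {b : B | ∃ x y : E, (inner B x y : B) = b} ≤
      LinearMap.ker (R : B →ₗ[ℂ] B) := by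
    refine Submodule.span_le.mpr ?_
    rintro _ ⟨u, v, rfl⟩
    change (inner B u v : B) * c = 0
    rw [← inner_op_smul_right, h v, inner_zero_right]
  have hker : LinearMap.ker (R : B →ₗ[ℂ] B) = ⊤ := top_le_iff.mp <| hfull ▸
    Submodule.topologicalClosure_minimal _ hspan (ContinuousLinearMap.isClosed_ker R)
  have hc : star c * c = 0 := LinearMap.congr_fun (LinearMap.ker_eq_top.mp hker) (star c)
  exact (CStarRing.star_mul_self_eq_zero_iff c).mp hc

variable [StarOrderedRing B]

lemma continuous_inner : Continuous (fun p : E × E => (inner B p.1 p.2 : B)) :=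
  MulOpposite.continuous_unop.comp (CStarModule.continuous_inner (A := Bᵐᵒᵖ))

variable (B) in
lemma eq_zero_of_forall_inner_eq_zero_of_dense {D : Set E} (hD : Dense D) {e : E}
    (h : ∀ y ∈ D, (inner B e y : B) = 0) : e = 0 := by
  have hcont : Continuous fun y : E => (inner B e y : B) :=
    continuous_inner.comp (continuous_const.prodMk continuous_id)
  have hzero := Continuous.ext_on hD hcont continuous_const h
  exact inner_self.mp (congrFun hzero e)

end CStarModuleRight

def innerSpan (B : Type*) {E : Type*} [NonUnitalCStarAlgebra B] [PartialOrder B]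
    [NormedAddCommGroup E] [NormedSpace ℂ E] [SMul Bᵐᵒᵖ E] [CStarModuleRight B E]
    (D : Submodule ℂ E) : Submodule ℂ B :=
  Submodule.span ℂ {b : B | ∃ x y : D, (inner B (x : E) (y : E) : B) = b}

section InducedDerivation

open CStarModuleRight

variable {B E : Type*} [NonUnitalCStarAlgebra B] [PartialOrder B]
  [NormedAddCommGroup E] [NormedSpace ℂ E] [SMul Bᵐᵒᵖ E] [CStarModuleRight B E]
  {D : Submodule ℂ E} {δ : D →ₗ[ℂ] E} {d : innerSpan B D →ₗ[ℂ] B}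

lemma op_smul_mem_of_mem_innerSpan
    (hinv : ∀ x y z : D, (x : E) <• (inner B (y : E) (z : E) : B) ∈ D)
    (x : D) {b : B} (hb : b ∈ innerSpan B D) : (x : E) <• b ∈ D := by
  have hle : innerSpan B D ≤ D.comap (opSMulCLM B E x : B →ₗ[ℂ] E) :=
    Submodule.span_le.mpr <| by rintro _ ⟨y, z, rfl⟩; exact hinv x y z
  exact hle hb

lemma map_op_smul_of_mem_innerSpan
    (hinv : ∀ x y z : D, (x : E) <• (inner B (y : E) (z : E) : B) ∈ D)
    (htern : ∀ x y z : D,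
      δ ⟨(x : E) <• (inner B (y : E) (z : E) : B), hinv x y z⟩ =
        δ x <• (inner B (y : E) (z : E) : B) + (x : E) <• (inner B (δ y) (z : E) : B)
          + (x : E) <• (inner B (y : E) (δ z) : B))
    (hd : ∀ x y : D, d ⟨(inner B (x : E) (y : E) : B), Submodule.subset_span ⟨x, y, rfl⟩⟩ =
      (inner B (δ x) (y : E) : B) + (inner B (x : E) (δ y) : B))
    (x : D) (b : innerSpan B D) :
    δ ⟨(x : E) <• (b : B), op_smul_mem_of_mem_innerSpan hinv x b.2⟩ =
      δ x <• (b : B) + (x : E) <• d b := by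
  let L₁ : innerSpan B D →ₗ[ℂ] E := δ ∘ₗ
    (((opSMulCLM B E x : B →ₗ[ℂ] E) ∘ₗ (innerSpan B D).subtype).codRestrict D
      fun b => op_smul_mem_of_mem_innerSpan hinv x b.2)
  let L₂ : innerSpan B D →ₗ[ℂ] E :=
    (opSMulCLM B E (δ x) : B →ₗ[ℂ] E) ∘ₗ (innerSpan B D).subtype +
      (opSMulCLM B E x : B →ₗ[ℂ] E) ∘ₗ d
  have hL : L₁ = L₂ := LinearMap.ext_on Submodule.span_span_coe_preimage <| by
    rintro ⟨_, hb⟩ ⟨y, z, rfl⟩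
    change δ ⟨_, hinv x y z⟩ = δ x <• (inner B (y : E) (z : E) : B) + (x : E) <• d ⟨_, hb⟩
    rw [htern, hd, op_smul_add, add_assoc]
  exact LinearMap.congr_fun hL b

theorem isSeqClosable_inducedDerivation
    (hfull : (Submodule.span ℂ {b : B | ∃ x y : E, (inner B x y : B) = b}).topologicalClosure = ⊤)
    (hdense : Dense (D : Set E))
    (hinv : ∀ x y z : D, (x : E) <• (inner B (y : E) (z : E) : B) ∈ D)
    (htern : ∀ x y z : D,
      δ ⟨(x : E) <• (inner B (y : E) (z : E) : B), hinv x y z⟩ =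
        δ x <• (inner B (y : E) (z : E) : B) + (x : E) <• (inner B (δ y) (z : E) : B)
          + (x : E) <• (inner B (y : E) (δ z) : B))
    (hd : ∀ x y : D, d ⟨(inner B (x : E) (y : E) : B), Submodule.subset_span ⟨x, y, rfl⟩⟩ =
      (inner B (δ x) (y : E) : B) + (inner B (x : E) (δ y) : B))
    (hδ : IsSeqClosable δ) : IsSeqClosable d := by
  intro b c hb hdb
  have hD : ∀ x : D, (x : E) <• c = 0 := fun x => by
    refine hδ (fun n => ⟨(x : E) <• (b n : B), op_smul_mem_of_mem_innerSpan hinv x (b n).2⟩) _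
      ?_ ?_
    · have h := ((opSMulCLM B E x).continuous.tendsto 0).comp hb
      rwa [map_zero] at h
    · simp_rw [map_op_smul_of_mem_innerSpan hinv htern hd]
      have h := (((opSMulCLM B E (δ x)).continuous.tendsto 0).comp hb).add
        (((opSMulCLM B E x).continuous.tendsto c).comp hdb)
      rwa [map_zero, zero_add] at h
  have hE : ∀ x : E, x <• c = 0 := congrFun <|
    Continuous.ext_on hdense ((opSMulCLM B E).flip c).continuous continuous_const
      fun x hx => hD ⟨x, hx⟩
  exact eq_zero_of_forall_op_smul_eq_zero hfull hE

theorem isSeqClosable_of_isSeqClosable_inducedDerivation [StarOrderedRing B]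
    (hdense : Dense (D : Set E))
    (hd : ∀ x y : D, d ⟨(inner B (x : E) (y : E) : B), Submodule.subset_span ⟨x, y, rfl⟩⟩ =
      (inner B (δ x) (y : E) : B) + (inner B (x : E) (δ y) : B))
    (hd_closable : IsSeqClosable d) : IsSeqClosable δ := by
  intro x e hx hδx
  refine eq_zero_of_forall_inner_eq_zero_of_dense B hdense fun y hy => ?_
  lift y to D using hy
  have hinner {u : ℕ → E} {v : E} (w : E) (hu : Tendsto u atTop (𝓝 v)) :
      Tendsto (fun n => (inner B (u n) w : B)) atTop (𝓝 (inner B v w)) :=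
    (CStarModuleRight.continuous_inner.tendsto (v, w)).comp (hu.prodMk_nhds tendsto_const_nhds)
  refine hd_closable (fun n => ⟨inner B (x n : E) y, Submodule.subset_span ⟨x n, y, rfl⟩⟩) _ ?_ ?_
  · simpa using hinner (y : E) hx
  · simp_rw [hd]
    simpa using (hinner (y : E) hδx).add (hinner (δ y) hx)

end InducedDerivation

theorem stmt14_general {B E : Type*}
    [NonUnitalCStarAlgebra B] [PartialOrder B] [StarOrderedRing B]
    [NormedAddCommGroup E] [NormedSpace ℂ E] [SMul Bᵐᵒᵖ E] [CStarModuleRight B E]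
    (hfull : (Submodule.span ℂ {b : B | ∃ x y : E, (inner B x y : B) = b}).topologicalClosure = ⊤)
    (D : Submodule ℂ E) (hdense : Dense (D : Set E)) (δ : D →ₗ[ℂ] E)
    (hinv : ∀ x y z : D, (x : E) <• (inner B (y : E) (z : E) : B) ∈ D)
    (htern : ∀ x y z : D,
      δ ⟨(x : E) <• (inner B (y : E) (z : E) : B), hinv x y z⟩ =
        δ x <• (inner B (y : E) (z : E) : B) + (x : E) <• (inner B (δ y) (z : E) : B)
          + (x : E) <• (inner B (y : E) (δ z) : B))
    (d : (Submodule.span ℂ {b : B | ∃ x y : D, (inner B (x : E) (y : E) : B) = b}) →ₗ[ℂ] B)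
    (hd : ∀ x y : D, d ⟨(inner B (x : E) (y : E) : B), Submodule.subset_span ⟨x, y, rfl⟩⟩ =
      (inner B (δ x) (y : E) : B) + (inner B (x : E) (δ y) : B)) :
    (∀ (x : ℕ → D) (e : E),
      Tendsto (fun n => (x n : E)) atTop (𝓝 0) →
      Tendsto (fun n => δ (x n)) atTop (𝓝 e) → e = 0) ↔
    (∀ (b : ℕ → Submodule.span ℂ {b : B | ∃ x y : D, (inner B (x : E) (y : E) : B) = b}) (c : B),
      Tendsto (fun n => (b n : B)) atTop (𝓝 0) →
      Tendsto (fun n => d (b n)) atTop (𝓝 c) → c = 0) :=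
  ⟨isSeqClosable_inducedDerivation hfull hdense hinv htern hd,
    isSeqClosable_of_isSeqClosable_inducedDerivation hdense hd⟩

/-- A ternary derivation `δ` of a full Hilbert module is closable if and only if the
induced derivation `d_δ` is closable. -/
theorem stmt14 {B E : Type*}
    [NonUnitalCStarAlgebra B] [PartialOrder B] [StarOrderedRing B]
    [NormedAddCommGroup E] [NormedSpace ℂ E] [SMul Bᵐᵒᵖ E] [CStarModuleRight B E]
    [CompleteSpace E]
    (hfull : (Submodule.span ℂ {b : B | ∃ x y : E, (inner B x y : B) = b}).topologicalClosure = ⊤)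
    (D : Submodule ℂ E) (hdense : Dense (D : Set E)) (δ : D →ₗ[ℂ] E)
    (hinv : ∀ x y z : D, (x : E) <• (inner B (y : E) (z : E) : B) ∈ D)
    (htern : ∀ x y z : D,
      δ ⟨(x : E) <• (inner B (y : E) (z : E) : B), hinv x y z⟩ =
        δ x <• (inner B (y : E) (z : E) : B) + (x : E) <• (inner B (δ y) (z : E) : B)
          + (x : E) <• (inner B (y : E) (δ z) : B))
    (d : (Submodule.span ℂ {b : B | ∃ x y : D, (inner B (x : E) (y : E) : B) = b}) →ₗ[ℂ] B)
    (hd : ∀ x y : D, d ⟨(inner B (x : E) (y : E) : B), Submodule.subset_span ⟨x, y, rfl⟩⟩ =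
      (inner B (δ x) (y : E) : B) + (inner B (x : E) (δ y) : B)) :
    (∀ (x : ℕ → D) (e : E),
      Tendsto (fun n => (x n : E)) atTop (𝓝 0) →
      Tendsto (fun n => δ (x n)) atTop (𝓝 e) → e = 0) ↔
    (∀ (b : ℕ → Submodule.span ℂ {b : B | ∃ x y : D, (inner B (x : E) (y : E) : B) = b}) (c : B),
      Tendsto (fun n => (b n : B)) atTop (𝓝 0) →
      Tendsto (fun n => d (b n)) atTop (𝓝 c) → c = 0) :=
  stmt14_general hfull D hdense δ hinv htern d hd
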